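/- arXiv:2005.05473 — 4 statements merged into one kernel-verified Lean document; each statement's English description precedes it below -/
import Mathlib

section
/- Let k be an algebraically closed field and N ≥ 1 with char k ∤ N. Let E be an elliptic curve over k and C ⊂ E(k) a cyclic subgroup of order N. For any degree-N line bundle 𝓛 on E, any coset C' of C inside the coset E[N]' = {P ∈ E(k) : O(N·P) ≅ 𝓛} of E[N], and any choice, for each P ∈ C', of a global section s_P of 𝓛 with divisor of zeros N·P, the codimension of Span{s_P : P ∈ C'} in the N-dimensional space Γ(E,𝓛) depends only on the pair (E,C), and not on the choices of 𝓛, C', or the sections s_P. -/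
/-- An abstract model of the group of points and the function field of an elliptic curve `E`
over `k`, together with divisors, pullbacks along translations and inversion, and the
pushforward (norm) maps `[n]_*` along the multiplication-by-`n` isogenies. -/
structure CurveFn (k : Type) [Field k] where
  /-- the group of points `E(k)` (all points are closed since `k` is algebraically closed) -/
  Pt : Type
  [grp : AddCommGroup Pt]
  /-- the function field `k(E)` -/
  F : Type
  [fld : Field F]
  [alg : Algebra k F]
  /-- the divisor of a nonzero rational function -/
  div : Fˣ → (Pt →₀ ℤ)
  div_mul : ∀ f g : Fˣ, div (f * g) = div f + div g
  div_degree : ∀ f : Fˣ, (div f).sum (fun _ n => n) = 0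
  /-- the inclusion of the constants `k^× ⊆ k(E)^×` -/
  constU : kˣ →* Fˣ
  constU_spec : ∀ a : kˣ, ((constU a : Fˣ) : F) = algebraMap k F (a : k)
  div_constU : ∀ a : kˣ, div (constU a) = 0
  eq_constU_of_div_eq_zero : ∀ f : Fˣ, div f = 0 → ∃ a : kˣ, f = constU a
  /-- pullback `τ_P^*` along translation by a point `P` -/
  tau : Pt → (F ≃+* F)
  tau_algebraMap : ∀ (P : Pt) (a : k), tau P (algebraMap k F a) = algebraMap k F a
  tau_zero : tau 0 = RingEquiv.refl F
  tau_add : ∀ P Q : Pt, tau (P + Q) = (tau Q).trans (tau P)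
  div_tau : ∀ (P : Pt) (f : Fˣ),
    div (Units.map (tau P).toRingHom.toMonoidHom f) = (div f).mapDomain (fun x => x - P)
  /-- the pushforward (norm) `[n]_*` along multiplication by `n` -/
  pushNorm : ℕ → (Fˣ →* Fˣ)
  div_pushNorm : ∀ (n : ℕ) (f : Fˣ),
    div (pushNorm n f) = (div f).mapDomain (fun P => (n : ℤ) • P)
  pushNorm_constU : ∀ (n : ℕ) (a : kˣ), pushNorm n (constU a) = constU (a ^ (n ^ 2))
  pushNorm_mul_eq : ∀ m n : ℕ, pushNorm (m * n) = (pushNorm m).comp (pushNorm n)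
  pushNorm_tau : ∀ (n : ℕ) (P : Pt) (f : Fˣ),
    pushNorm n (Units.map (tau P).toRingHom.toMonoidHom f)
      = Units.map (tau (n • P)).toRingHom.toMonoidHom (pushNorm n f)
  /-- pullback `[-1]^*` along the inversion map of `E` -/
  negPull : F ≃+* F
  negPull_algebraMap : ∀ a : k, negPull (algebraMap k F a) = algebraMap k F a
  negPull_negPull : ∀ x : F, negPull (negPull x) = x
  div_negPull : ∀ f : Fˣ,
    div (Units.map negPull.toRingHom.toMonoidHom f) = (div f).mapDomain (fun x => -x)
  negPull_tau : ∀ (P : Pt) (x : F), negPull (tau (-P) x) = tau P (negPull x)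

attribute [instance] CurveFn.grp CurveFn.fld CurveFn.alg

variable {k : Type} [Field k]

/-- pullback along translation, on units -/
def CurveFn.tauU (X : CurveFn k) (P : X.Pt) : X.Fˣ →* X.Fˣ :=
  Units.map (X.tau P).toRingHom.toMonoidHom

/-- pullback along inversion, on units -/
def CurveFn.negPullU (X : CurveFn k) : X.Fˣ →* X.Fˣ :=
  Units.map X.negPull.toRingHom.toMonoidHom

/-- `a` is a root of unity. -/
def IsRootOfUnity {M : Type*} [Monoid M] (a : M) : Prop := ∃ n : ℕ, 0 < n ∧ a ^ n = 1

/-- `f ∈ k(E)^×` is *normalized* if `[n]_* f` is a constant root of unity for some `n ≥ 1`. -/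
def CurveFn.Normalized (X : CurveFn k) (f : X.Fˣ) : Prop :=
  ∃ n : ℕ, 0 < n ∧ ∃ u : kˣ, IsRootOfUnity u ∧ X.pushNorm n f = X.constU u

section helpers
variable {α β : Type*}

lemma mapDomainEquiv_nonneg_iff (e : α ≃ β) (w : α →₀ ℤ) :
    0 ≤ Finsupp.equivMapDomain e w ↔ 0 ≤ w := by
  constructor
  · intro h
    rw [Finsupp.le_def] at h ⊢
    intro i
    simpa [Finsupp.equivMapDomain_apply] using h (e i)
  · intro h
    rw [Finsupp.le_def] at h ⊢
    intro i
    simpa [Finsupp.equivMapDomain_apply] using h (e.symm i)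

lemma equivMapDomain_sub' (e : α ≃ β) (u v : α →₀ ℤ) :
    Finsupp.equivMapDomain e (u - v)
      = Finsupp.equivMapDomain e u - Finsupp.equivMapDomain e v := by
  ext b; simp [Finsupp.equivMapDomain_apply]

lemma equivMapDomain_add' (e : α ≃ β) (u v : α →₀ ℤ) :
    Finsupp.equivMapDomain e (u + v)
      = Finsupp.equivMapDomain e u + Finsupp.equivMapDomain e v := by
  ext b; simp [Finsupp.equivMapDomain_apply]

end helpers

lemma CurveFn.div_one' (X : CurveFn k) : X.div 1 = 0 := by
  have h := X.div_mul 1 1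
  rw [mul_one] at h
  exact (left_eq_add.mp h)

lemma CurveFn.div_inv' (X : CurveFn k) (f : X.Fˣ) : X.div f⁻¹ = -X.div f := by
  have h := X.div_mul f f⁻¹
  rw [mul_inv_cancel, X.div_one'] at h
  have h2 : X.div f + X.div f⁻¹ = 0 := h.symm
  rw [add_comm] at h2
  exact eq_neg_of_add_eq_zero_left h2


/-- Let `E` be an elliptic curve over an algebraically closed field `k`,
`N ≥ 1` with `char k ∤ N`, and `C ⊂ E(k)` a cyclic subgroup of order `N` (embedded via
`ι : ℤ/Nℤ ↪ E(k)`).  A degree-`N` line bundle `𝓛` is `O(D)` for a degree-`N` divisor `D`; its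
global sections are the rational functions `v` with `div v + D ≥ 0`; a coset `C'` of `C` inside
`E[N]' = {P : O(N·P) ≅ 𝓛}` consists of the points `P₀ + ι j`, and a section `s_P` with divisor
of zeros `N·P` is a rational function with `div s_P = N·P − D`.  Then the codimension of
`Span{s_P : P ∈ C'}` in `Γ(E,𝓛)` is the same for any two such choices `(D, P₀, s)` and
`(D', P₀', s')`: it depends only on `(E, C)`. -/
theorem codimension_independent_of_choices
    (k : Type) [Field k] [IsAlgClosed k] (X : CurveFn k)
    (N : ℕ) [NeZero N] (hN : 1 ≤ N) (hchar : (N : k) ≠ 0)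
    (ι : ZMod N →+ X.Pt) (hι : Function.Injective ι)
    -- first choice of line bundle, coset, and sections
    (D : X.Pt →₀ ℤ) (hDdeg : (D.sum fun _ n => n) = N)
    (P₀ : X.Pt) (s : ZMod N → X.Fˣ)
    (hs : ∀ j : ZMod N, X.div (s j) = Finsupp.single (P₀ + ι j) (N : ℤ) - D)
    (Γ : Submodule k X.F)
    (hΓ : ∀ v : X.F, v ∈ Γ ↔ ∀ hv : v ≠ 0, 0 ≤ X.div (Units.mk0 v hv) + D)
    -- second choice of line bundle, coset, and sections
    (D' : X.Pt →₀ ℤ) (hD'deg : (D'.sum fun _ n => n) = N)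
    (P₀' : X.Pt) (s' : ZMod N → X.Fˣ)
    (hs' : ∀ j : ZMod N, X.div (s' j) = Finsupp.single (P₀' + ι j) (N : ℤ) - D')
    (Γ' : Submodule k X.F)
    (hΓ' : ∀ v : X.F, v ∈ Γ' ↔ ∀ hv : v ≠ 0, 0 ≤ X.div (Units.mk0 v hv) + D') :
    Module.finrank k Γ -
        Module.finrank k (Submodule.span k (Set.range fun j : ZMod N => ((s j : X.Fˣ) : X.F)))
      = Module.finrank k Γ' -
        Module.finrank k
          (Submodule.span k (Set.range fun j : ZMod N => ((s' j : X.Fˣ) : X.F))) := by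
  classical
  set Q : X.Pt := P₀' - P₀ with hQdef
  set eq : X.Pt ≃ X.Pt := Equiv.subRight Q with heqdef
  -- mapDomain along translation is equivMapDomain
  have hmd : ∀ w : X.Pt →₀ ℤ, Finsupp.mapDomain (fun x => x - Q) w
      = Finsupp.equivMapDomain eq w := by
    intro w
    rw [Finsupp.equivMapDomain_eq_mapDomain]
    rfl
  have hdivtau : ∀ u : X.Fˣ, X.div (X.tauU Q u) = Finsupp.equivMapDomain eq (X.div u) := by
    intro u
    rw [← hmd]
    exact X.div_tau Q u
  set g : X.Fˣ := s 0 * (X.tauU Q (s' 0))⁻¹ with hgdef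
  have heqapp : ∀ x : X.Pt, eq x = x - Q := fun x => rfl
  have hQP : P₀' - Q = P₀ := by rw [hQdef]; abel
  have hsingle : ∀ (P : X.Pt) (n : ℤ), Finsupp.equivMapDomain eq (Finsupp.single P n)
      = Finsupp.single (P - Q) n := by
    intro P n
    rw [Finsupp.equivMapDomain_single]
    rfl
  have hdivg : X.div g = Finsupp.equivMapDomain eq D' - D := by
    rw [hgdef, X.div_mul, X.div_inv', hdivtau, hs 0, hs' 0, map_zero, add_zero, add_zero,
      equivMapDomain_sub', hsingle, hQP]
    abel
  -- divisors of transported sections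
  have hdivj : ∀ j : ZMod N, X.div (g * X.tauU Q (s' j)) = X.div (s j) := by
    intro j
    rw [X.div_mul, hdivtau, hdivg, hs j, hs' j, equivMapDomain_sub', hsingle]
    have : P₀' + ι j - Q = P₀ + ι j := by rw [hQdef]; abel
    rw [this]
    abel
  -- transported sections are scalar multiples
  have hconst : ∀ j : ZMod N, ∃ a : kˣ,
      ((g * X.tauU Q (s' j) : X.Fˣ) : X.F) = algebraMap k X.F (a : k) * ((s j : X.Fˣ) : X.F) := by
    intro j
    have h0 : X.div (g * X.tauU Q (s' j) * (s j)⁻¹) = 0 := by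
      rw [X.div_mul, X.div_inv', hdivj j]; abel
    obtain ⟨a, ha⟩ := X.eq_constU_of_div_eq_zero _ h0
    refine ⟨a, ?_⟩
    have := congrArg (fun u : X.Fˣ => ((u * s j : X.Fˣ) : X.F)) ha
    simpa [mul_assoc, X.constU_spec] using this
  -- the linear automorphism
  let T : X.F ≃ₐ[k] X.F := AlgEquiv.ofRingEquiv (f := X.tau Q) (fun a => X.tau_algebraMap Q a)
  let M : X.F ≃ₗ[k] X.F :=
    LinearEquiv.ofLinear (LinearMap.mulLeft k ((g : X.Fˣ) : X.F))
      (LinearMap.mulLeft k (((g : X.Fˣ) : X.F)⁻¹))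
      (by ext x; simp [LinearMap.mulLeft_apply, ← mul_assoc,
            mul_inv_cancel₀ (Units.ne_zero g)])
      (by ext x; simp [LinearMap.mulLeft_apply, ← mul_assoc,
            inv_mul_cancel₀ (Units.ne_zero g)])
  let e : X.F ≃ₗ[k] X.F := T.toLinearEquiv.trans M
  have he : ∀ v : X.F, e v = ((g : X.Fˣ) : X.F) * X.tau Q v := fun v => rfl
  -- e maps Γ' into/onto Γ
  have hmem : ∀ v : X.F, v ∈ Γ' ↔ e v ∈ Γ := by
    intro v
    by_cases hv : v = 0
    · subst hv
      simp only [map_zero]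
      exact ⟨fun _ => Γ.zero_mem, fun _ => Γ'.zero_mem⟩
    · have htv : X.tau Q v ≠ 0 := by
        intro h
        apply hv
        have := congrArg (X.tau Q).symm h
        simpa using this
      have hev : e v ≠ 0 := by
        rw [he]
        exact mul_ne_zero (Units.ne_zero g) htv
      have hu : Units.mk0 (e v) hev = g * X.tauU Q (Units.mk0 v hv) := by
        apply Units.ext
        rfl
      have hdiv_ev : X.div (Units.mk0 (e v) hev) + D
          = Finsupp.equivMapDomain eq (X.div (Units.mk0 v hv) + D') := by
        rw [hu, X.div_mul, hdivtau, hdivg, equivMapDomain_add']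
        abel
      rw [hΓ' v, hΓ (e v)]
      constructor
      · intro h hv'
        have hrw : Units.mk0 (e v) hv' = Units.mk0 (e v) hev := rfl
        rw [hrw, hdiv_ev]
        exact (mapDomainEquiv_nonneg_iff eq _).mpr (h hv)
      · intro h hv''
        have hrw : Units.mk0 v hv'' = Units.mk0 v hv := rfl
        rw [hrw]
        have h2 := h hev
        rw [hdiv_ev] at h2
        exact (mapDomainEquiv_nonneg_iff eq _).mp h2
  have hmapΓ : Submodule.map (e : X.F →ₗ[k] X.F) Γ' = Γ := by
    ext x
    rw [Submodule.mem_map_equiv]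
    rw [hmem (e.symm x), e.apply_symm_apply]
  -- span images
  have hspan : Submodule.map (e : X.F →ₗ[k] X.F)
      (Submodule.span k (Set.range fun j : ZMod N => ((s' j : X.Fˣ) : X.F)))
      = Submodule.span k (Set.range fun j : ZMod N => ((s j : X.Fˣ) : X.F)) := by
    rw [Submodule.map_span]
    apply le_antisymm
    · rw [Submodule.span_le]
      rintro x ⟨y, ⟨j, rfl⟩, rfl⟩
      obtain ⟨a, ha⟩ := hconst j
      have hev : e ((s' j : X.Fˣ) : X.F) = (a : k) • ((s j : X.Fˣ) : X.F) := by
        have h0 : e ((s' j : X.Fˣ) : X.F) = ((g * X.tauU Q (s' j) : X.Fˣ) : X.F) := rfl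
        rw [h0, ha, Algebra.smul_def]
      rw [LinearEquiv.coe_coe, hev]
      exact Submodule.smul_mem _ _ (Submodule.subset_span ⟨j, rfl⟩)
    · rw [Submodule.span_le]
      rintro x ⟨j, rfl⟩
      obtain ⟨a, ha⟩ := hconst j
      have hev : e ((s' j : X.Fˣ) : X.F) = (a : k) • ((s j : X.Fˣ) : X.F) := by
        have h0 : e ((s' j : X.Fˣ) : X.F) = ((g * X.tauU Q (s' j) : X.Fˣ) : X.F) := rfl
        rw [h0, ha, Algebra.smul_def]
      have : ((s j : X.Fˣ) : X.F) = ((a : k)⁻¹) • e ((s' j : X.Fˣ) : X.F) := by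
        rw [hev, smul_smul, inv_mul_cancel₀ (Units.ne_zero a), one_smul]
      have hin : ((s j : X.Fˣ) : X.F) ∈ Submodule.span k
          ((e : X.F →ₗ[k] X.F) '' Set.range fun j : ZMod N => ((s' j : X.Fˣ) : X.F)) := by
        rw [this]
        refine Submodule.smul_mem _ _ (Submodule.subset_span ?_)
        exact ⟨((s' j : X.Fˣ) : X.F), ⟨j, rfl⟩, rfl⟩
      exact hin
  have h1 : Module.finrank k Γ = Module.finrank k Γ' := by
    rw [← hmapΓ]
    exact LinearEquiv.finrank_map_eq e Γ'
  have h2 : Module.finrank k (Submodule.span k (Set.range fun j : ZMod N => ((s j : X.Fˣ) : X.F)))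
      = Module.finrank k
        (Submodule.span k (Set.range fun j : ZMod N => ((s' j : X.Fˣ) : X.F))) := by
    rw [← hspan]
    exact LinearEquiv.finrank_map_eq e _
  rw [h1, h2]
end

section
/- Let E be an elliptic curve over an algebraically closed field k and let μ be the group of roots of unity in k. Call f ∈ k(E)^× normalized if [N]_* f ∈ μ for some N ≥ 1. Then: (i) if f is normalized and N' is a multiple of such an N, then [N']_* f ∈ μ; (ii) the normalized functions form a subgroup of k(E)^×; (iii) for every principal divisor on E supported on torsion points, there exists a normalized function with that divisor, and it is unique up to multiplication by a root of unity; (iv) a normalized constant function is an element of μ; (v) if f is normalized and P is a torsion point of E, then τ_P^* f is normalized. -/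
variable {k : Type} [Field k]

section Aux

lemma ru_one : IsRootOfUnity (1 : kˣ) := ⟨1, one_pos, one_pow 1⟩

lemma ru_mul {u v : kˣ} (hu : IsRootOfUnity u) (hv : IsRootOfUnity v) :
    IsRootOfUnity (u * v) := by
  obtain ⟨m, hm, hum⟩ := hu
  obtain ⟨n, hn, hvn⟩ := hv
  exact ⟨m * n, by positivity, by
    rw [mul_pow, pow_mul, hum, one_pow, mul_comm m n, pow_mul, hvn, one_pow, one_mul]⟩

lemma ru_inv {u : kˣ} (hu : IsRootOfUnity u) : IsRootOfUnity u⁻¹ := by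
  obtain ⟨m, hm, hum⟩ := hu
  exact ⟨m, hm, by rw [inv_pow, hum, inv_one]⟩

lemma ru_pow {u : kˣ} (hu : IsRootOfUnity u) (c : ℕ) : IsRootOfUnity (u ^ c) := by
  obtain ⟨m, hm, hum⟩ := hu
  exact ⟨m, hm, by rw [← pow_mul, mul_comm c m, pow_mul, hum, one_pow]⟩

variable {k : Type} [Field k] (X : CurveFn k)

lemma aux_div_one : X.div 1 = 0 := by
  have h := X.div_mul 1 1
  rw [one_mul] at h
  exact left_eq_add.mp h

lemma aux_div_inv (f : X.Fˣ) : X.div f⁻¹ = - X.div f := by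
  have h := X.div_mul f f⁻¹
  rw [mul_inv_cancel, aux_div_one] at h
  exact eq_neg_of_add_eq_zero_left (by rw [add_comm]; exact h.symm)

lemma aux_constU_inj : Function.Injective X.constU := by
  intro a b h
  have h2 : ((X.constU a : X.Fˣ) : X.F) = ((X.constU b : X.Fˣ) : X.F) := by rw [h]
  rw [X.constU_spec, X.constU_spec] at h2
  exact Units.ext ((algebraMap k X.F).injective h2)

lemma aux_tauU_zero (f : X.Fˣ) : X.tauU 0 f = f := by
  apply Units.ext
  show X.tau 0 (f : X.F) = f
  rw [X.tau_zero]
  rfl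

lemma part_i (f : X.Fˣ) (n n' : ℕ) (hn : 0 < n) (hd : n ∣ n')
    (h : ∃ u : kˣ, IsRootOfUnity u ∧ X.pushNorm n f = X.constU u) :
    ∃ u' : kˣ, IsRootOfUnity u' ∧ X.pushNorm n' f = X.constU u' := by
  obtain ⟨u, hu, hf⟩ := h
  obtain ⟨c, rfl⟩ := hd
  refine ⟨u ^ (c ^ 2), ru_pow hu _, ?_⟩
  rw [mul_comm n c, X.pushNorm_mul_eq, MonoidHom.comp_apply, hf, X.pushNorm_constU]

lemma nmz_one : X.Normalized 1 :=
  ⟨1, one_pos, 1, ru_one, by rw [map_one, map_one]⟩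

lemma nmz_mul {f g : X.Fˣ} (hf : X.Normalized f) (hg : X.Normalized g) :
    X.Normalized (f * g) := by
  obtain ⟨n, hn, hfe⟩ := hf
  obtain ⟨m, hm, hge⟩ := hg
  obtain ⟨u, hu, hfu⟩ := part_i X f n (n * m) hn ⟨m, rfl⟩ hfe
  obtain ⟨v, hv, hgv⟩ := part_i X g m (n * m) hm ⟨n, mul_comm n m⟩ hge
  exact ⟨n * m, by positivity, u * v, ru_mul hu hv, by
    rw [map_mul, hfu, hgv, map_mul]⟩

lemma nmz_inv {f : X.Fˣ} (hf : X.Normalized f) : X.Normalized f⁻¹ := by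
  obtain ⟨n, hn, u, hu, h⟩ := hf
  exact ⟨n, hn, u⁻¹, ru_inv hu, by rw [map_inv, h, map_inv]⟩

lemma part_iv (a : kˣ) (h : X.Normalized (X.constU a)) : IsRootOfUnity a := by
  obtain ⟨n, hn, u, hu, h⟩ := h
  rw [X.pushNorm_constU] at h
  have ha : a ^ (n ^ 2) = u := aux_constU_inj X h
  obtain ⟨m, hm, hum⟩ := hu
  refine ⟨n ^ 2 * m, by positivity, ?_⟩
  rw [pow_mul, ha, hum]

lemma aux_mapDomain_zero {Pt : Type} [AddCommGroup Pt] (d : Pt →₀ ℤ)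
    (hdeg : d.sum (fun _ n => n) = 0) (g : Pt → Pt)
    (hg : ∀ P ∈ d.support, g P = 0) : d.mapDomain g = 0 := by
  rw [Finsupp.mapDomain_congr (g := fun _ => (0 : Pt)) hg, Finsupp.mapDomain, Finsupp.sum]
  have h2 := (map_sum (Finsupp.singleAddHom (0 : Pt)) (fun P => d P) d.support).symm
  simp only [Finsupp.singleAddHom_apply] at h2
  rw [h2, show (∑ P ∈ d.support, d P) = d.sum (fun _ n => n) from rfl, hdeg,
    Finsupp.single_zero]

lemma exists_common_N {Pt : Type} [AddCommGroup Pt] (s : Finset Pt)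
    (h : ∀ P ∈ s, ∃ n : ℕ, 0 < n ∧ n • P = 0) :
    ∃ N : ℕ, 0 < N ∧ ∀ P ∈ s, N • P = 0 := by
  classical
  induction s using Finset.induction_on with
  | empty => exact ⟨1, one_pos, by simp⟩
  | @insert a s ha ih =>
    obtain ⟨n, hn, hna⟩ := h a (Finset.mem_insert_self a s)
    obtain ⟨N, hN, hNs⟩ := ih (fun P hP => h P (Finset.mem_insert_of_mem hP))
    refine ⟨n * N, by positivity, fun P hP => ?_⟩
    rcases Finset.mem_insert.mp hP with rfl | hP
    · rw [mul_comm, mul_smul, hna, smul_zero]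
    · rw [mul_smul, hNs P hP, smul_zero]

lemma part_iii_exists [IsAlgClosed k] (f : X.Fˣ)
    (h : ∀ P ∈ (X.div f).support, ∃ n : ℕ, 0 < n ∧ n • P = 0) :
    ∃ g : X.Fˣ, X.Normalized g ∧ X.div g = X.div f := by
  obtain ⟨N, hN, hNs⟩ := exists_common_N _ h
  have hdiv0 : X.div (X.pushNorm N f) = 0 := by
    rw [X.div_pushNorm]
    exact aux_mapDomain_zero _ (X.div_degree f) _
      (fun P hP => by rw [natCast_zsmul]; exact hNs P hP)
  obtain ⟨a, ha⟩ := X.eq_constU_of_div_eq_zero _ hdiv0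
  obtain ⟨c, hc⟩ := IsAlgClosed.exists_pow_nat_eq ((a⁻¹ : kˣ) : k) (n := N ^ 2)
    (by positivity)
  have hc0 : c ≠ 0 := by
    intro h0
    rw [h0, zero_pow (by positivity)] at hc
    exact (a⁻¹ : kˣ).ne_zero hc.symm
  set cu : kˣ := Units.mk0 c hc0 with hcu_def
  have hcu : cu ^ (N ^ 2) = a⁻¹ := Units.ext (by
    rw [Units.val_pow_eq_pow_val]; exact hc)
  refine ⟨X.constU cu * f, ⟨N, hN, 1, ru_one, ?_⟩, ?_⟩
  · rw [map_mul, ha, X.pushNorm_constU, ← map_mul, hcu, inv_mul_cancel]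
  · rw [X.div_mul, X.div_constU, zero_add]

lemma part_iii_unique [IsAlgClosed k] (f g₁ g₂ : X.Fˣ)
    (h₁ : X.Normalized g₁) (h₂ : X.Normalized g₂)
    (hd₁ : X.div g₁ = X.div f) (hd₂ : X.div g₂ = X.div f) :
    ∃ u : kˣ, IsRootOfUnity u ∧ g₂ = X.constU u * g₁ := by
  have hdiv0 : X.div (g₂ * g₁⁻¹) = 0 := by
    rw [X.div_mul, aux_div_inv, hd₁, hd₂, add_neg_cancel]
  obtain ⟨a, ha⟩ := X.eq_constU_of_div_eq_zero _ hdiv0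
  have hn : X.Normalized (X.constU a) := ha ▸ nmz_mul X h₂ (nmz_inv X h₁)
  exact ⟨a, part_iv X a hn, mul_inv_eq_iff_eq_mul.mp ha⟩

lemma part_v (f : X.Fˣ) (P : X.Pt) (hf : X.Normalized f)
    (hP : ∃ n : ℕ, 0 < n ∧ n • P = 0) : X.Normalized (X.tauU P f) := by
  obtain ⟨m, hm, hPm⟩ := hP
  obtain ⟨n, hn, hfe⟩ := hf
  obtain ⟨u, hu, h⟩ := part_i X f n (n * m) hn ⟨m, rfl⟩ hfe
  refine ⟨n * m, by positivity, u, hu, ?_⟩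
  have key := X.pushNorm_tau (n * m) P f
  rw [show (n * m) • P = (0 : X.Pt) by rw [mul_smul, hPm, smul_zero]] at key
  show X.pushNorm (n * m) (X.tauU P f) = X.constU u
  rw [CurveFn.tauU, key, h]
  exact aux_tauU_zero X _

end Aux
/-- Basic properties of normalized functions on an elliptic curve:
(i) if `[N]_* f` is a constant root of unity then so is `[N']_* f` for every multiple `N'` of `N`;
(ii) the normalized functions form a subgroup of `k(E)^×`;
(iii) every principal divisor supported on torsion points is the divisor of a normalized
function, unique up to multiplication by a root of unity;
(iv) a normalized constant function is a root of unity;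
(v) the pullback of a normalized function by translation by a torsion point is normalized. -/
theorem normalized_functions_properties
    (k : Type) [Field k] [IsAlgClosed k] (X : CurveFn k) :
    -- (i)
    (∀ (f : X.Fˣ) (n n' : ℕ), 0 < n → n ∣ n' → 0 < n' →
        (∃ u : kˣ, IsRootOfUnity u ∧ X.pushNorm n f = X.constU u) →
        ∃ u' : kˣ, IsRootOfUnity u' ∧ X.pushNorm n' f = X.constU u') ∧
    -- (ii)
    (X.Normalized 1 ∧
      (∀ f g : X.Fˣ, X.Normalized f → X.Normalized g → X.Normalized (f * g)) ∧
      (∀ f : X.Fˣ, X.Normalized f → X.Normalized f⁻¹)) ∧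
    -- (iii)
    (∀ f : X.Fˣ, (∀ P ∈ (X.div f).support, ∃ n : ℕ, 0 < n ∧ n • P = 0) →
        (∃ g : X.Fˣ, X.Normalized g ∧ X.div g = X.div f) ∧
        (∀ g₁ g₂ : X.Fˣ, X.Normalized g₁ → X.Normalized g₂ →
          X.div g₁ = X.div f → X.div g₂ = X.div f →
          ∃ u : kˣ, IsRootOfUnity u ∧ g₂ = X.constU u * g₁)) ∧
    -- (iv)
    (∀ a : kˣ, X.Normalized (X.constU a) → IsRootOfUnity a) ∧
    -- (v)
    (∀ (f : X.Fˣ) (P : X.Pt), X.Normalized f → (∃ n : ℕ, 0 < n ∧ n • P = 0) →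
        X.Normalized (X.tauU P f)) := by
  exact ⟨fun f n np hn hd _ h => part_i X f n np hn hd h,
    ⟨nmz_one X, fun f g hf hg => nmz_mul X hf hg, fun f hf => nmz_inv X hf⟩,
    fun f h => ⟨part_iii_exists X f h, fun g₁ g₂ h₁ h₂ hd₁ hd₂ => part_iii_unique X f g₁ g₂ h₁ h₂ hd₁ hd₂⟩,
    fun a h => part_iv X a h,
    fun f P hf hP => part_v X f P hf hP⟩
end

section
/- Let N be odd with char k ∤ N, let C ⊂ E(k) be cyclic of order N, and let s_O be a normalized rational function on E with divisor N·O − C. Then [−1]^* s_O = s_O, where [−1] is the inversion map of E. -/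
variable {k : Type} [Field k]

/-!
The ratio `[-1]^* s / s` has trivial divisor, because `N·O − C` is symmetric, so it is a
constant `a`, and `a² = 1` since `[-1]` is an involution. The product `T` of the translates
`τ_P^* s` over `P ∈ C` has divisor `∑_P (N·(−P) − C) = N·C − N·C = 0`, so it is constant too and
hence fixed by `[-1]^*`; on the other hand `[-1]^* τ_P^* = τ_{−P}^* [-1]^*` gives
`[-1]^* T = a^N T`. Thus `a^N = 1`, and `a = 1` because `N` is odd.
-/

open Finsupp

section ImageDivisor

variable {G P : Type*} [AddCommGroup G] [Fintype G] [AddCommGroup P] (ι : G →+ P)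

noncomputable def imageDivisor : P →₀ ℤ := ∑ g, single (ι g) 1

lemma mapDomain_neg_imageDivisor : (imageDivisor ι).mapDomain (fun x => -x) = imageDivisor ι := by
  simp only [imageDivisor, mapDomain_finsetSum, mapDomain_single, ← map_neg]
  exact Fintype.sum_equiv (Equiv.neg G) _ _ fun _ => rfl

lemma mapDomain_sub_imageDivisor (h : G) :
    (imageDivisor ι).mapDomain (fun x => x - ι h) = imageDivisor ι := by
  simp only [imageDivisor, mapDomain_finsetSum, mapDomain_single, ← map_sub]
  exact Fintype.sum_equiv (Equiv.subRight h) _ _ fun _ => rfl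

lemma sum_mapDomain_sub_card_single_zero_sub_imageDivisor :
    ∑ h, (single 0 (Fintype.card G : ℤ) - imageDivisor ι).mapDomain (fun x => x - ι h) = 0 := by
  simp only [mapDomain_sub, mapDomain_single, mapDomain_sub_imageDivisor, zero_sub,
    Finset.sum_sub_distrib, Finset.sum_const, Finset.card_univ, sub_eq_zero]
  calc ∑ h, single (-ι h) (Fintype.card G : ℤ)
      = ∑ h, single (ι h) (Fintype.card G : ℤ) :=
        Fintype.sum_equiv (Equiv.neg G) _ _ fun h => by simp
    _ = Fintype.card G • imageDivisor ι := by
        simp [imageDivisor, Finset.smul_sum, smul_single]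

end ImageDivisor

namespace CurveFn

variable (X : CurveFn k)

@[simp] lemma coe_negPullU (f : X.Fˣ) : (X.negPullU f : X.F) = X.negPull f := rfl

@[simp] lemma coe_tauU (P : X.Pt) (f : X.Fˣ) : (X.tauU P f : X.F) = X.tau P f := rfl

lemma constU_injective : Function.Injective X.constU := fun a b h =>
  Units.ext <| (algebraMap k X.F).injective <| by rw [← X.constU_spec, ← X.constU_spec, h]

lemma negPullU_constU (a : kˣ) : X.negPullU (X.constU a) = X.constU a :=
  Units.ext <| by simp [X.constU_spec, X.negPull_algebraMap]

lemma tauU_constU (P : X.Pt) (a : kˣ) : X.tauU P (X.constU a) = X.constU a :=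
  Units.ext <| by simp [X.constU_spec, X.tau_algebraMap]

lemma negPullU_negPullU (f : X.Fˣ) : X.negPullU (X.negPullU f) = f :=
  Units.ext <| X.negPull_negPull f

lemma negPullU_tauU (P : X.Pt) (f : X.Fˣ) :
    X.negPullU (X.tauU P f) = X.tauU (-P) (X.negPullU f) :=
  Units.ext <| by simpa using X.negPull_tau (-P) f

lemma div_one : X.div 1 = 0 := by simpa using X.div_constU 1

lemma div_inv (f : X.Fˣ) : X.div f⁻¹ = -X.div f :=
  eq_neg_of_add_eq_zero_right <| by rw [← X.div_mul, mul_inv_cancel, X.div_one]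

lemma div_prod {α : Type*} (t : Finset α) (f : α → X.Fˣ) :
    X.div (∏ i ∈ t, f i) = ∑ i ∈ t, X.div (f i) := by
  classical
  induction t using Finset.cons_induction with
  | empty => simpa using X.div_one
  | cons i t hi ih => rw [Finset.prod_cons, Finset.sum_cons, X.div_mul, ih]

lemma div_negPullU (f : X.Fˣ) : X.div (X.negPullU f) = (X.div f).mapDomain (fun x => -x) :=
  X.div_negPull f

lemma div_tauU (P : X.Pt) (f : X.Fˣ) :
    X.div (X.tauU P f) = (X.div f).mapDomain (fun x => x - P) :=
  X.div_tau P f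

lemma exists_eq_constU_mul_of_div_eq {f g : X.Fˣ} (h : X.div f = X.div g) :
    ∃ a : kˣ, f = X.constU a * g := by
  obtain ⟨a, ha⟩ := X.eq_constU_of_div_eq_zero (f * g⁻¹) <| by
    rw [X.div_mul, X.div_inv, h, add_neg_cancel]
  exact ⟨a, mul_inv_eq_iff_eq_mul.mp ha⟩

lemma sq_eq_one_of_negPullU_eq {f : X.Fˣ} {a : kˣ} (ha : X.negPullU f = X.constU a * f) :
    a ^ 2 = 1 := by
  have : X.constU (a ^ 2) * f = f := by
    conv_rhs => rw [← X.negPullU_negPullU f, ha, map_mul, X.negPullU_constU, ha]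
    rw [map_pow, pow_two, mul_assoc]
  exact X.constU_injective <| by rw [mul_eq_right.mp this, map_one]

section Translates

variable {G : Type*} [AddCommGroup G] [Fintype G] (ι : G →+ X.Pt)

lemma div_prod_tauU (f : X.Fˣ) :
    X.div (∏ g, X.tauU (ι g) f) = ∑ g, (X.div f).mapDomain (fun x => x - ι g) := by
  simp only [X.div_prod, X.div_tauU]

lemma negPullU_prod_tauU {f : X.Fˣ} {a : kˣ} (ha : X.negPullU f = X.constU a * f) :
    X.negPullU (∏ g, X.tauU (ι g) f) = X.constU (a ^ Fintype.card G) * ∏ g, X.tauU (ι g) f := by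
  simp only [map_prod, X.negPullU_tauU, ha, map_mul, X.tauU_constU, Finset.prod_mul_distrib,
    Finset.prod_const, Finset.card_univ, map_pow, ← map_neg ι]
  congr 1
  exact Fintype.prod_equiv (Equiv.neg G) _ _ fun _ => rfl

lemma pow_card_eq_one_of_negPullU_eq {f : X.Fˣ} {a : kˣ} (ha : X.negPullU f = X.constU a * f)
    (hT : X.div (∏ g, X.tauU (ι g) f) = 0) : a ^ Fintype.card G = 1 := by
  obtain ⟨c, hc⟩ := X.eq_constU_of_div_eq_zero _ hT
  have := X.negPullU_prod_tauU ι ha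
  rw [hc, X.negPullU_constU, eq_comm, mul_eq_right] at this
  exact X.constU_injective <| by rw [this, map_one]

end Translates

end CurveFn

theorem inversion_fixes_normalized_sO_general
    (k : Type) [Field k] (X : CurveFn k)
    (N : ℕ) [NeZero N] (hodd : Odd N)
    (ι : ZMod N →+ X.Pt)
    (s : X.Fˣ)
    (hdiv : X.div s =
      Finsupp.single (0 : X.Pt) (N : ℤ) - ∑ j : ZMod N, Finsupp.single (ι j) (1 : ℤ)) :
    X.negPull (s : X.F) = (s : X.F) := by
  replace hdiv : X.div s = single 0 (Fintype.card (ZMod N) : ℤ) - imageDivisor ι := by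
    rw [ZMod.card, hdiv, imageDivisor]
  have hsymm : X.div (X.negPullU s) = X.div s := by
    rw [X.div_negPullU, hdiv, mapDomain_sub, mapDomain_single, neg_zero,
      mapDomain_neg_imageDivisor]
  obtain ⟨a, ha⟩ := X.exists_eq_constU_mul_of_div_eq hsymm
  have ha2 : a ^ 2 = 1 := X.sq_eq_one_of_negPullU_eq ha
  have haN : a ^ N = 1 := by
    rw [← ZMod.card N]
    refine X.pow_card_eq_one_of_negPullU_eq ι ha ?_
    rw [X.div_prod_tauU, hdiv, sum_mapDomain_sub_card_single_zero_sub_imageDivisor]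
  have ha1 : a = 1 := by
    simpa [Nat.coprime_two_left.mpr hodd] using pow_gcd_eq_one.mpr ⟨ha2, haN⟩
  rw [← X.coe_negPullU, ha, ha1, map_one, one_mul]

/-- Let `N` be odd with `char k ∤ N`, let `C ⊂ E(k)` be cyclic of order `N`
(embedded via `ι : ℤ/Nℤ ↪ E(k)`), and let `s_O` be a normalized rational function on `E` with
divisor `N·O − C`.  Then `[-1]^* s_O = s_O`. -/
theorem inversion_fixes_normalized_sO
    (k : Type) [Field k] [IsAlgClosed k] (X : CurveFn k)
    (N : ℕ) [NeZero N] (hodd : Odd N) (hchar : (N : k) ≠ 0)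
    (ι : ZMod N →+ X.Pt) (hι : Function.Injective ι)
    (s : X.Fˣ) (hs : X.Normalized s)
    (hdiv : X.div s =
      Finsupp.single (0 : X.Pt) (N : ℤ) - ∑ j : ZMod N, Finsupp.single (ι j) (1 : ℤ)) :
    X.negPull (s : X.F) = (s : X.F) :=
  inversion_fixes_normalized_sO_general k X N hodd ι s hdiv
end

section
/- Let N ≥ 3 be an odd integer. Define r : ℤ/Nℤ → ℚ by r_0 = N − 1 and r_i = −1 for i ≠ 0. Then the unique function n : ℤ/Nℤ → ℚ satisfying (n_{i+1} − n_i) + (n_{i−1} − n_i) + r_i = 0 for all i ∈ ℤ/Nℤ and Σ_{i∈ℤ/Nℤ} n_i = 0 is given by n_i = (N²−1)/12 − i(N−i)/2 for 0 ≤ i < N. Moreover, the minimum value of n is −(N²−1)/24, attained exactly at i = (N−1)/2 and i = (N+1)/2. -/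
/-!
The difference of two solutions has vanishing cycle Laplacian and zero sum. Its increments
`f (i + 1) - f i` are then invariant under `i ↦ i + 1` and sum to zero, hence vanish, so the
difference is constant with zero sum, hence zero.

The quadratic `q x = (N² - 1)/12 - x (N - x)/2` (`ngonValuation N`) has second difference `1`
and `q N = q 0`, so `i ↦ q i.val` solves the system away from `0`; at `0` the neighbour `-1`
is read as `N - 1` instead of `-1`, which costs exactly `N`. Finally `q x = -(N² - 1)/24 + ((N - 2x)² - 1)/8`, and
`N - 2x` is an odd integer for integral `x`, so its square is at least `1`, with equality
exactly at `x = (N ∓ 1)/2`.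
-/

open Finset

theorem ZMod.sum_comp_val {M : Type*} [AddCommMonoid M] (N : ℕ) [NeZero N] (g : ℕ → M) :
    ∑ i : ZMod N, g i.val = ∑ k ∈ range N, g k := by
  obtain ⟨n, rfl⟩ : ∃ n, N = n + 1 := Nat.exists_eq_succ_of_ne_zero (NeZero.ne N)
  exact Fin.sum_univ_eq_sum_range g (n + 1)

theorem ZMod.apply_eq_apply_zero_of_forall_add_one {α : Type*} {N : ℕ} [NeZero N]
    {f : ZMod N → α} (h : ∀ i, f (i + 1) = f i) (i : ZMod N) : f i = f 0 := by
  obtain ⟨k, rfl⟩ := ZMod.natCast_zmod_surjective i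
  induction k with
  | zero => simp
  | succ k ih => rw [Nat.cast_succ, h, ih]

theorem ZMod.sum_add_one_sub {M : Type*} [AddCommGroup M] {N : ℕ} [NeZero N] (f : ZMod N → M) :
    ∑ i, (f (i + 1) - f i) = 0 := by
  rw [sum_sub_distrib, sub_eq_zero]
  exact Fintype.sum_equiv (Equiv.addRight 1) _ _ fun _ => rfl

section CycleLaplacian

variable {M : Type*} [AddCommGroup M] {N : ℕ}

def cycleLaplacian (f : ZMod N → M) (i : ZMod N) : M :=
  (f (i + 1) - f i) + (f (i - 1) - f i)

theorem cycleLaplacian_sub (f g : ZMod N → M) (i : ZMod N) :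
    cycleLaplacian (f - g) i = cycleLaplacian f i - cycleLaplacian g i := by
  simp only [cycleLaplacian, Pi.sub_apply]
  abel

variable [NeZero N] [IsAddTorsionFree M]

theorem eq_zero_of_forall_add_one_of_sum_eq_zero {f : ZMod N → M}
    (h : ∀ i, f (i + 1) = f i) (hs : ∑ i, f i = 0) : f = 0 := by
  have hconst := ZMod.apply_eq_apply_zero_of_forall_add_one h
  have : N • f 0 = 0 := by
    rwa [sum_congr rfl fun i _ => hconst i, sum_const, card_univ, ZMod.card] at hs
  funext i
  rw [hconst, Pi.zero_apply, ← nsmul_eq_zero_iff_right (NeZero.ne N), this]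

theorem eq_zero_of_cycleLaplacian_eq_zero {f : ZMod N → M}
    (h : ∀ i, cycleLaplacian f i = 0) (hs : ∑ i, f i = 0) : f = 0 := by
  have hdiff : (fun i => f (i + 1) - f i) = 0 := by
    refine eq_zero_of_forall_add_one_of_sum_eq_zero (fun i => ?_) (ZMod.sum_add_one_sub f)
    have := h (i + 1)
    rw [cycleLaplacian, add_sub_cancel_right] at this
    rw [← sub_eq_zero, ← this]
    abel
  exact eq_zero_of_forall_add_one_of_sum_eq_zero (fun i => sub_eq_zero.1 (congrFun hdiff i)) hs

theorem eq_of_cycleLaplacian_eq {f g : ZMod N → M}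
    (h : ∀ i, cycleLaplacian f i = cycleLaplacian g i) (hs : ∑ i, f i = ∑ i, g i) : f = g := by
  refine sub_eq_zero.1 (eq_zero_of_cycleLaplacian_eq_zero (fun i => ?_) ?_)
  · rw [cycleLaplacian_sub, h, sub_self]
  · simp only [Pi.sub_apply, sum_sub_distrib, hs, sub_self]

end CycleLaplacian

def ngonValuation (N : ℕ) (x : ℚ) : ℚ := ((N : ℚ) ^ 2 - 1) / 12 - x * (N - x) / 2

section NgonValuation

variable {N : ℕ}

theorem sum_range_ngonValuation (m : ℕ) :
    ∑ k ∈ range m, ngonValuation N k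
      = m * (((N : ℚ) ^ 2 - 1) / 12) - m * (m - 1) * (3 * N - 2 * m + 1) / 12 := by
  induction m with
  | zero => simp
  | succ m ih => rw [sum_range_succ, ih, ngonValuation]; push_cast; ring

-- Since `q N = q 0`, the wrap-around `(N : ZMod N) = 0` costs nothing here.
theorem ngonValuation_natCast_val_of_le [NeZero N] {m : ℕ} (hm : m ≤ N) :
    ngonValuation N (m : ZMod N).val = ngonValuation N m := by
  rcases hm.lt_or_eq with hm | rfl
  · rw [ZMod.val_natCast_of_lt hm]
  · rw [ZMod.natCast_self, ZMod.val_zero, ngonValuation, ngonValuation]; push_cast; ring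

variable [NeZero N]

theorem sum_ngonValuation_val : ∑ i : ZMod N, ngonValuation N i.val = 0 := by
  rw [ZMod.sum_comp_val N (fun k => ngonValuation N k), sum_range_ngonValuation]
  ring

theorem cycleLaplacian_ngonValuation_zero :
    cycleLaplacian (fun i : ZMod N => ngonValuation N i.val) 0 = 1 - N := by
  have hpred : ((N - 1 : ℕ) : ZMod N) = 0 - 1 := by
    rw [Nat.cast_pred (NeZero.pos N), ZMod.natCast_self]
  rw [cycleLaplacian, zero_add, ← hpred, ← Nat.cast_one, ← Nat.cast_zero,
    ngonValuation_natCast_val_of_le (NeZero.one_le), ngonValuation_natCast_val_of_le (Nat.sub_le N 1),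
    ngonValuation_natCast_val_of_le (Nat.zero_le N), ngonValuation, ngonValuation, ngonValuation,
    Nat.cast_pred (NeZero.pos N)]
  push_cast
  ring

theorem cycleLaplacian_ngonValuation_of_ne_zero {i : ZMod N} (hi : i ≠ 0) :
    cycleLaplacian (fun i : ZMod N => ngonValuation N i.val) i = 1 := by
  obtain ⟨k, hk, rfl⟩ : ∃ k < N, (k : ZMod N) = i := ⟨i.val, i.val_lt, ZMod.natCast_zmod_val i⟩
  have hk0 : 0 < k := Nat.pos_of_ne_zero (by rintro rfl; exact hi Nat.cast_zero)
  rw [cycleLaplacian, ← Nat.cast_succ, ← Nat.cast_pred hk0,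
    ngonValuation_natCast_val_of_le hk, ngonValuation_natCast_val_of_le hk.le,
    ngonValuation_natCast_val_of_le (by omega), ngonValuation, ngonValuation, ngonValuation,
    Nat.cast_pred hk0]
  push_cast
  ring

end NgonValuation

section Minimum

variable {N : ℕ}

theorem ngonValuation_eq_add_sq (x : ℚ) :
    ngonValuation N x = -(((N : ℚ) ^ 2 - 1) / 24) + ((N - 2 * x) ^ 2 - 1) / 8 := by
  rw [ngonValuation]; ring

theorem neg_le_ngonValuation (hodd : Odd N) (k : ℤ) :
    -(((N : ℚ) ^ 2 - 1) / 24) ≤ ngonValuation N k := by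
  have hne : (N : ℤ) - 2 * k ≠ 0 := by obtain ⟨t, rfl⟩ := hodd; omega
  have hsq : (1 : ℚ) ≤ (N - 2 * k) ^ 2 := by
    exact_mod_cast (one_le_sq_iff_one_le_abs _).2 (Int.one_le_abs hne)
  rw [ngonValuation_eq_add_sq]
  linarith

theorem ngonValuation_eq_iff (hodd : Odd N) (k : ℕ) :
    ngonValuation N k = -(((N : ℚ) ^ 2 - 1) / 24) ↔ k = (N - 1) / 2 ∨ k = (N + 1) / 2 := by
  have hsq : ((N : ℚ) - 2 * k) ^ 2 = 1 ↔ (N : ℤ) - 2 * k = 1 ∨ (N : ℤ) - 2 * k = -1 := by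
    rw [← sq_eq_one_iff]; exact_mod_cast Iff.rfl
  rw [ngonValuation_eq_add_sq, add_eq_left, div_eq_zero_iff, sub_eq_zero, hsq,
    or_iff_left (by norm_num)]
  obtain ⟨t, rfl⟩ := hodd
  omega

end Minimum

/-- Let `N ≥ 3` be odd, `r : ℤ/Nℤ → ℚ` with `r 0 = N − 1` and `r i = −1` for
`i ≠ 0`.  Then there is exactly one `n : ℤ/Nℤ → ℚ` with
`(n_{i+1} − n_i) + (n_{i−1} − n_i) + r_i = 0` for all `i` and `Σ_i n_i = 0`; it is given by
`n_i = (N²−1)/12 − i(N−i)/2` for `0 ≤ i < N`, its minimum value is `−(N²−1)/24`, attained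
exactly at `i = (N−1)/2` and `i = (N+1)/2`. -/
theorem ngon_valuation_system
    (N : ℕ) [NeZero N] (hN : 3 ≤ N) (hodd : Odd N)
    (r : ZMod N → ℚ) (hr0 : r 0 = (N : ℚ) - 1) (hr : ∀ i : ZMod N, i ≠ 0 → r i = -1) :
    (∃! n : ZMod N → ℚ,
        (∀ i : ZMod N, (n (i + 1) - n i) + (n (i - 1) - n i) + r i = 0) ∧
        ∑ i : ZMod N, n i = 0) ∧
    ∀ n : ZMod N → ℚ,
      (∀ i : ZMod N, (n (i + 1) - n i) + (n (i - 1) - n i) + r i = 0) →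
      ∑ i : ZMod N, n i = 0 →
      ((∀ i : ℕ, i < N →
          n (i : ZMod N) = ((N : ℚ) ^ 2 - 1) / 12 - (i : ℚ) * ((N : ℚ) - (i : ℚ)) / 2) ∧
       (∀ i : ZMod N, -(((N : ℚ) ^ 2 - 1) / 24) ≤ n i) ∧
       (∀ i : ZMod N, n i = -(((N : ℚ) ^ 2 - 1) / 24) ↔
          (i = (((N - 1) / 2 : ℕ) : ZMod N) ∨ i = (((N + 1) / 2 : ℕ) : ZMod N)))) := by
  set n₀ : ZMod N → ℚ := fun i => ngonValuation N i.val
  have hsol : ∀ i, cycleLaplacian n₀ i + r i = 0 := by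
    intro i
    rcases eq_or_ne i 0 with rfl | hi
    · rw [cycleLaplacian_ngonValuation_zero, hr0, sub_add_sub_cancel', sub_self]
    · rw [cycleLaplacian_ngonValuation_of_ne_zero hi, hr i hi, add_neg_cancel]
  have huniq : ∀ n, (∀ i, cycleLaplacian n i + r i = 0) → ∑ i, n i = 0 → n = n₀ :=
    fun n h hs => eq_of_cycleLaplacian_eq (fun i => by linarith [h i, hsol i])
      (hs.trans sum_ngonValuation_val.symm)
  refine ⟨⟨n₀, ⟨hsol, sum_ngonValuation_val⟩, fun n hn => huniq n hn.1 hn.2⟩, fun n h hs => ?_⟩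
  obtain rfl := huniq n h hs
  refine ⟨fun i hi => by simp only [n₀, ZMod.val_natCast_of_lt hi, ngonValuation],
    fun i => neg_le_ngonValuation hodd i.val, fun i => ?_⟩
  have hval (c : ℕ) (hc : c < N) : i = c ↔ i.val = c := by
    rw [← (ZMod.val_injective N).eq_iff, ZMod.val_natCast_of_lt hc]
  rw [hval _ (by omega), hval _ (by omega)]
  exact ngonValuation_eq_iff hodd i.val
end
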